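/- Let s ∈ {0,1}^n with d_x = wt(s), d_y = n − wt(s), and suppose the observed composition polynomial satisfies S̃(x,y) = S_s(x,y) + E(x,y), where E is a Laurent-type error term that is an integer linear combination of at most 2t distinct monomials x^a y^b. Then x^{d_x} y^{d_y} · ( n + 1 + S̃(x,y) + S̃(1/x, 1/y) ) = P_s(x,y) · P*_s(x,y) + Ẽ(x,y) (as functions of nonzero x, y), where Ẽ(x,y) = x^{d_x} y^{d_y} ( E(x,y) + E(1/x, 1/y) ) is an integer linear combination of at most 4t distinct monomials x^a y^b with integer exponents a, b. In particular, knowing S̃ and wt(s) mod (2t+1) (which determines d_x and d_y when at most t of the single-bit compositions are corrupted) one can form P_s(x,y)·P*_s(x,y) + Ẽ(x,y) with Ẽ having at most 4t terms. -/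
import Mathlib

/-- All nonempty contiguous substrings of a binary string `s`. -/
def substrings (s : List Bool) : List (List Bool) :=
  (List.range s.length).flatMap
    (fun i => (List.range (s.length - i)).map (fun j => (s.drop i).take (j + 1)))

/-- Evaluation of the prefix polynomial `P_s(x,y) = Σ_{i=0}^n x^{u_i} y^{i-u_i}`. -/
def prefixPolyEval {R : Type*} [CommSemiring R] (s : List Bool) (x y : R) : R :=
  ∑ i ∈ Finset.range (s.length + 1),
    x ^ ((s.take i).count true) * y ^ ((s.take i).count false)

/-- Evaluation of the composition polynomial
`S_s(x,y) = Σ_{1 ≤ i ≤ j ≤ n} x^{o_{i,j}} y^{z_{i,j}}`. -/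
def compPolyEval {R : Type*} [CommSemiring R] (s : List Bool) (x y : R) : R :=
  ((substrings s).map (fun u => x ^ (u.count true) * y ^ (u.count false))).sum

section Aux

variable {F : Type*} [Field F]

private lemma list_sum_flatMap {α : Type*} (l : List α) (g : α → List F) :
    (l.flatMap g).sum = (l.map (fun i => (g i).sum)).sum := by
  induction l with
  | nil => simp
  | cons a l ih => simp [List.flatMap_cons, ih]

private lemma compPolyEval_eq_sum (s : List Bool) (x y : F) :
    compPolyEval s x y =
      ∑ p ∈ Finset.range s.length, ∑ q ∈ Finset.range (s.length - p),
        x ^ (((s.drop p).take (q + 1)).count true) *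
          y ^ (((s.drop p).take (q + 1)).count false) := by
  unfold compPolyEval substrings
  rw [List.map_flatMap, list_sum_flatMap]
  simp only [List.map_map]
  rfl

private lemma count_take_add (s : List Bool) (i j : ℕ) (b : Bool) :
    (s.take i).count b + ((s.drop i).take j).count b = (s.take (i + j)).count b := by
  rw [List.take_add, List.count_append]

private lemma square_split (m : ℕ) (f : ℕ → ℕ → F) :
    ∑ i ∈ Finset.range m, ∑ j ∈ Finset.range m, f i j =
      (∑ i ∈ Finset.range m, f i i)
        + (∑ i ∈ Finset.range m, ∑ j ∈ Finset.range i, f i j)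
        + (∑ i ∈ Finset.range m, ∑ j ∈ Finset.range i, f j i) := by
  induction m with
  | zero => simp
  | succ m ih =>
    simp only [Finset.sum_range_succ]
    rw [Finset.sum_add_distrib, ih]
    ring

private lemma tri_reindex (n : ℕ) (f : ℕ → ℕ → F) :
    ∑ i ∈ Finset.range (n + 1), ∑ j ∈ Finset.range i, f i j =
      ∑ p ∈ Finset.range n, ∑ q ∈ Finset.range (n - p), f (p + q + 1) p := by
  induction n with
  | zero => simp
  | succ n ih =>
    rw [Finset.sum_range_succ (fun i => ∑ j ∈ Finset.range i, f i j), ih,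
      Finset.sum_range_succ (fun p => ∑ q ∈ Finset.range (n + 1 - p), f (p + q + 1) p)]
    have h1 : ∀ p ∈ Finset.range n,
        ∑ q ∈ Finset.range (n + 1 - p), f (p + q + 1) p
          = (∑ q ∈ Finset.range (n - p), f (p + q + 1) p) + f (n + 1) p := by
      intro p hp
      have hp' : p < n := Finset.mem_range.mp hp
      have e1 : n + 1 - p = (n - p) + 1 := by omega
      rw [e1, Finset.sum_range_succ]
      have e2 : p + (n - p) + 1 = n + 1 := by omega
      rw [e2]
    rw [Finset.sum_congr rfl h1, Finset.sum_add_distrib, Finset.sum_range_succ (f (n + 1))]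
    have e3 : n + 1 - n = 1 := by omega
    rw [e3, Finset.sum_range_one]
    ring

private lemma key (s : List Bool) (x y : F) (hx : x ≠ 0) (hy : y ≠ 0) :
    x ^ (s.count true) * y ^ (s.count false) *
        (((s.length : F) + 1) + compPolyEval s x y + compPolyEval s x⁻¹ y⁻¹) =
      prefixPolyEval s x y *
        (x ^ (s.count true) * y ^ (s.count false) * prefixPolyEval s x⁻¹ y⁻¹) := by
  set n := s.length with hn
  set a : ℕ → ℕ := fun i => (s.take i).count true with ha
  set b : ℕ → ℕ := fun i => (s.take i).count false with hb
  have ha' : ∀ i, (s.take i).count true = a i := fun _ => rfl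
  have hb' : ∀ i, (s.take i).count false = b i := fun _ => rfl
  have hsa : s.count true = a n := by
    show s.count true = (s.take n).count true
    rw [hn, List.take_length]
  have hsb : s.count false = b n := by
    show s.count false = (s.take n).count false
    rw [hn, List.take_length]
  set T : ℕ → ℕ → F := fun i j =>
    x ^ ((a n : ℤ) + a i - a j) * y ^ ((b n : ℤ) + b i - b j) with hT
  -- right hand side as a square sum
  have hR : prefixPolyEval s x y *
      (x ^ (s.count true) * y ^ (s.count false) * prefixPolyEval s x⁻¹ y⁻¹) =
      ∑ i ∈ Finset.range (n + 1), ∑ j ∈ Finset.range (n + 1), T i j := by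
    unfold prefixPolyEval
    simp only [ha', hb', ← hn, hsa, hsb]
    rw [Finset.sum_mul]
    refine Finset.sum_congr rfl fun i _ => ?_
    rw [Finset.mul_sum, Finset.mul_sum]
    refine Finset.sum_congr rfl fun j _ => ?_
    simp only [hT]
    have ex : (a n : ℤ) + a i - a j = (a i : ℤ) + ((a n : ℤ) + (-(a j : ℤ))) := by ring
    have ey : (b n : ℤ) + b i - b j = (b i : ℤ) + ((b n : ℤ) + (-(b j : ℤ))) := by ring
    rw [ex, ey, zpow_add₀ hx, zpow_add₀ hx, zpow_add₀ hy, zpow_add₀ hy]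
    simp only [zpow_natCast, zpow_neg, ← inv_pow]
    ring
  -- diagonal
  have hdiag : x ^ (s.count true) * y ^ (s.count false) * ((n : F) + 1) =
      ∑ i ∈ Finset.range (n + 1), T i i := by
    have hTc : ∀ i, T i i = x ^ (s.count true) * y ^ (s.count false) := by
      intro i
      simp only [hT, add_sub_cancel_right, hsa, hsb, zpow_natCast]
    simp only [hTc]
    rw [Finset.sum_const, Finset.card_range, nsmul_eq_mul]
    push_cast
    ring
  -- lower triangle
  have h2 : x ^ (s.count true) * y ^ (s.count false) * compPolyEval s x y =
      ∑ i ∈ Finset.range (n + 1), ∑ j ∈ Finset.range i, T i j := by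
    rw [compPolyEval_eq_sum, tri_reindex n T, Finset.mul_sum]
    refine Finset.sum_congr rfl fun p hp => ?_
    rw [Finset.mul_sum]
    refine Finset.sum_congr rfl fun q hq => ?_
    have hct := count_take_add s p (q + 1) true
    have hcf := count_take_add s p (q + 1) false
    rw [show p + (q + 1) = p + q + 1 from by omega] at hct hcf
    simp only [ha'] at hct
    simp only [hb'] at hcf
    simp only [hT, hsa, hsb]
    have ex : (a n : ℤ) + a (p + q + 1) - a p
        = ((a n + ((s.drop p).take (q + 1)).count true : ℕ) : ℤ) := by
      push_cast
      omega
    have ey : (b n : ℤ) + b (p + q + 1) - b p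
        = ((b n + ((s.drop p).take (q + 1)).count false : ℕ) : ℤ) := by
      push_cast
      omega
    rw [ex, ey, zpow_natCast, zpow_natCast, pow_add, pow_add]
    ring
  -- upper triangle
  have h3 : x ^ (s.count true) * y ^ (s.count false) * compPolyEval s x⁻¹ y⁻¹ =
      ∑ i ∈ Finset.range (n + 1), ∑ j ∈ Finset.range i, T j i := by
    rw [compPolyEval_eq_sum, tri_reindex n (fun i j => T j i), Finset.mul_sum]
    refine Finset.sum_congr rfl fun p hp => ?_
    rw [Finset.mul_sum]
    refine Finset.sum_congr rfl fun q hq => ?_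
    have hct := count_take_add s p (q + 1) true
    have hcf := count_take_add s p (q + 1) false
    rw [show p + (q + 1) = p + q + 1 from by omega] at hct hcf
    simp only [ha'] at hct
    simp only [hb'] at hcf
    simp only [hT, hsa, hsb]
    have ex : (a n : ℤ) + a p - a (p + q + 1)
        = (a n : ℤ) - (((s.drop p).take (q + 1)).count true : ℤ) := by
      omega
    have ey : (b n : ℤ) + b p - b (p + q + 1)
        = (b n : ℤ) - (((s.drop p).take (q + 1)).count false : ℤ) := by
      omega
    rw [ex, ey, zpow_sub₀ hx, zpow_sub₀ hy]
    simp only [zpow_natCast, div_eq_mul_inv, ← inv_pow]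
    ring
  rw [hR, square_split (n + 1) T, mul_add, mul_add, hdiag, h2, h3]

private lemma fiber_sum {φ : ℤ × ℤ → ℤ × ℤ} (D D' : Finset (ℤ × ℤ))
    (h : ∀ p ∈ D, φ p ∈ D') (c : ℤ × ℤ → ℤ) (m : ℤ × ℤ → F) :
    ∑ q ∈ D', ((∑ p ∈ D.filter (fun p => φ p = q), c p : ℤ) : F) * m q
      = ∑ p ∈ D, (c p : F) * m (φ p) := by
  rw [← Finset.sum_fiberwise_of_maps_to h (fun p => (c p : F) * m (φ p))]
  refine Finset.sum_congr rfl fun q hq => ?_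
  push_cast
  rw [Finset.sum_mul]
  refine Finset.sum_congr rfl fun p hp => ?_
  rw [(Finset.mem_filter.mp hp).2]

end Aux

/-- Let `s ∈ {0,1}^n`, `d_x = wt(s)`, `d_y = n - wt(s)`, and
suppose the observed composition polynomial is `S̃(x,y) = S_s(x,y) + E(x,y)`,
where `E` is an integer linear combination of at most `2t` distinct (Laurent)
monomials `x^a y^b`.  Then, as functions of nonzero `x, y`,
`x^{d_x} y^{d_y} (n + 1 + S̃(x,y) + S̃(1/x,1/y)) = P_s(x,y)·P*_s(x,y) + Ẽ(x,y)`,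
where `P*_s(x,y) = x^{d_x} y^{d_y} P_s(1/x,1/y)` and `Ẽ` is an integer linear
combination of at most `4t` distinct monomials `x^a y^b` with integer
exponents. -/
theorem corrupted_comp_poly_identity {F : Type*} [Field F] (t : ℕ) (s : List Bool)
    (Stilde : F → F → F) (D : Finset (ℤ × ℤ)) (c : ℤ × ℤ → ℤ)
    (hD : D.card ≤ 2 * t)
    (hS : ∀ x y : F, x ≠ 0 → y ≠ 0 →
      Stilde x y = compPolyEval s x y + ∑ p ∈ D, (c p : F) * x ^ p.1 * y ^ p.2) :
    ∃ (D' : Finset (ℤ × ℤ)) (c' : ℤ × ℤ → ℤ), D'.card ≤ 4 * t ∧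
      ∀ x y : F, x ≠ 0 → y ≠ 0 →
        x ^ (s.count true) * y ^ (s.count false) *
            (((s.length : F) + 1) + Stilde x y + Stilde x⁻¹ y⁻¹) =
          prefixPolyEval s x y *
              (x ^ (s.count true) * y ^ (s.count false) * prefixPolyEval s x⁻¹ y⁻¹) +
            ∑ p ∈ D', (c' p : F) * x ^ p.1 * y ^ p.2 := by
  classical
  set dx : ℤ := (s.count true : ℤ) with hdx
  set dy : ℤ := (s.count false : ℤ) with hdy
  set φ : ℤ × ℤ → ℤ × ℤ := fun p => (dx + p.1, dy + p.2) with hφ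
  set ψ : ℤ × ℤ → ℤ × ℤ := fun p => (dx - p.1, dy - p.2) with hψ
  refine ⟨D.image φ ∪ D.image ψ,
    fun q => (∑ p ∈ D.filter (fun p => φ p = q), c p)
      + (∑ p ∈ D.filter (fun p => ψ p = q), c p), ?_, ?_⟩
  · calc (D.image φ ∪ D.image ψ).card ≤ (D.image φ).card + (D.image ψ).card :=
          Finset.card_union_le _ _
      _ ≤ D.card + D.card := add_le_add (Finset.card_image_le) (Finset.card_image_le)
      _ ≤ 4 * t := by omega
  · intro x y hx hy
    have hx' : x⁻¹ ≠ 0 := inv_ne_zero hx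
    have hy' : y⁻¹ ≠ 0 := inv_ne_zero hy
    rw [hS x y hx hy, hS x⁻¹ y⁻¹ hx' hy']
    have expand : x ^ (s.count true) * y ^ (s.count false) *
        (((s.length : F) + 1)
          + (compPolyEval s x y + ∑ p ∈ D, (c p : F) * x ^ p.1 * y ^ p.2)
          + (compPolyEval s x⁻¹ y⁻¹ + ∑ p ∈ D, (c p : F) * x⁻¹ ^ p.1 * y⁻¹ ^ p.2)) =
        x ^ (s.count true) * y ^ (s.count false) *
          (((s.length : F) + 1) + compPolyEval s x y + compPolyEval s x⁻¹ y⁻¹)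
        + x ^ (s.count true) * y ^ (s.count false) *
            (∑ p ∈ D, (c p : F) * x ^ p.1 * y ^ p.2)
        + x ^ (s.count true) * y ^ (s.count false) *
            (∑ p ∈ D, (c p : F) * x⁻¹ ^ p.1 * y⁻¹ ^ p.2) := by ring
    rw [expand, key s x y hx hy]
    have hE1 : x ^ (s.count true) * y ^ (s.count false) *
        (∑ p ∈ D, (c p : F) * x ^ p.1 * y ^ p.2)
        = ∑ p ∈ D, (c p : F) * (x ^ (φ p).1 * y ^ (φ p).2) := by
      rw [Finset.mul_sum]
      refine Finset.sum_congr rfl fun p _ => ?_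
      simp only [hφ, hdx, hdy]
      rw [zpow_add₀ hx, zpow_add₀ hy, zpow_natCast, zpow_natCast]
      ring
    have hE2 : x ^ (s.count true) * y ^ (s.count false) *
        (∑ p ∈ D, (c p : F) * x⁻¹ ^ p.1 * y⁻¹ ^ p.2)
        = ∑ p ∈ D, (c p : F) * (x ^ (ψ p).1 * y ^ (ψ p).2) := by
      rw [Finset.mul_sum]
      refine Finset.sum_congr rfl fun p _ => ?_
      simp only [hψ, hdx, hdy]
      rw [zpow_sub₀ hx, zpow_sub₀ hy, zpow_natCast, zpow_natCast, inv_zpow, inv_zpow]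
      field_simp
    rw [hE1, hE2]
    have hfib : ∑ q ∈ D.image φ ∪ D.image ψ,
        ((((∑ p ∈ D.filter (fun p => φ p = q), c p)
          + (∑ p ∈ D.filter (fun p => ψ p = q), c p) : ℤ)) : F) * x ^ q.1 * y ^ q.2
        = (∑ p ∈ D, (c p : F) * (x ^ (φ p).1 * y ^ (φ p).2))
          + ∑ p ∈ D, (c p : F) * (x ^ (ψ p).1 * y ^ (ψ p).2) := by
      have h1 : ∀ p ∈ D, φ p ∈ D.image φ ∪ D.image ψ := fun p hp =>
        Finset.mem_union_left _ (Finset.mem_image_of_mem φ hp)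
      have h2 : ∀ p ∈ D, ψ p ∈ D.image φ ∪ D.image ψ := fun p hp =>
        Finset.mem_union_right _ (Finset.mem_image_of_mem ψ hp)
      rw [← fiber_sum D _ h1 c (fun q => x ^ q.1 * y ^ q.2),
        ← fiber_sum D _ h2 c (fun q => x ^ q.1 * y ^ q.2), ← Finset.sum_add_distrib]
      refine Finset.sum_congr rfl fun q _ => ?_
      push_cast
      ring
    rw [hfib]
    ring
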